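/- arXiv:2407.21528 — 3 statements merged into one kernel-verified Lean document; each statement's English description precedes it below -/
import Mathlib

section
/- Under the standing assumptions, there exist a constant C > 0 and ε₀ > 0 such that for every ε ≤ ε₀, the set { (x,x') ∈ Ω₀ × Ω₀ : C_ε(x) ≥ D(x, ∇g*(x')) } is contained in { (x,x') ∈ ℝ^{2d} : ‖x − x'‖ ≤ C ε^{1/(d+2)} }. -/
open MeasureTheory Filter Set Metric Bornology
open scoped RealInnerProductSpace ENNReal NNReal Topology

noncomputable section

abbrev Euc (d : ℕ) : Type := EuclideanSpace ℝ (Fin d)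

/-- The cone with vertex `x`, axis direction `v`, height `r` and opening angle `θ`:
`{x + u : ‖u‖ cos(θ/2) ≤ ⟪v,u⟫ ≤ r}`. -/
def otCone {d : ℕ} (x v : Euc d) (r θ : ℝ) : Set (Euc d) :=
  {y | ∃ u : Euc d, y = x + u ∧ ‖u‖ * Real.cos (θ / 2) ≤ ⟪v, u⟫ ∧ ⟪v, u⟫ ≤ r}

/-- Interior cone condition with height `r` and angle `θ`. -/
def otConeCond {d : ℕ} (Ω : Set (Euc d)) (r θ : ℝ) : Prop :=
  ∀ x ∈ Ω, ∃ v : Euc d, ‖v‖ = 1 ∧ otCone x v r θ ⊆ Ω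

/-- Convex (Legendre) conjugate `g*`. -/
def lconj {d : ℕ} (g : Euc d → ℝ) (x : Euc d) : ℝ :=
  sSup (Set.range fun y => ⟪x, y⟫ - g y)

/-- The measure `ρ dℓ_d` restricted to `Ω`. -/
def densM {d : ℕ} (Ω : Set (Euc d)) (ρ : Euc d → ℝ) : Measure (Euc d) :=
  (volume.restrict Ω).withDensity fun x => ENNReal.ofReal (ρ x)

/-- Couplings of `μ₀` and `μ₁`. -/
def otCouplings {d : ℕ} (μ₀ μ₁ : Measure (Euc d)) : Set (Measure (Euc d × Euc d)) :=
  {π | π.map Prod.fst = μ₀ ∧ π.map Prod.snd = μ₁}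

/-- Squared 2-Wasserstein cost, valued in `ℝ≥0∞`. -/
def W2sqE {d : ℕ} (μ₀ μ₁ : Measure (Euc d)) : ℝ≥0∞ :=
  ⨅ π ∈ otCouplings μ₀ μ₁, ∫⁻ p, ENNReal.ofReal (‖p.1 - p.2‖ ^ 2) ∂π

def W2sq {d : ℕ} (μ₀ μ₁ : Measure (Euc d)) : ℝ := (W2sqE μ₀ μ₁).toReal

open scoped Classical in
/-- Quadratically regularized optimal transport cost, valued in `ℝ≥0∞`;
the penalty is `+∞` when `π` is not absolutely continuous wrt `μ₀ ⊗ μ₁`. -/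
def QOTE {d : ℕ} (μ₀ μ₁ : Measure (Euc d)) (ε : ℝ) : ℝ≥0∞ :=
  ⨅ π ∈ otCouplings μ₀ μ₁,
    (∫⁻ p, ENNReal.ofReal (‖p.1 - p.2‖ ^ 2) ∂π) +
      (if π ≪ μ₀.prod μ₁ then
        ENNReal.ofReal ε * ∫⁻ p, (π.rnDeriv (μ₀.prod μ₁) p) ^ 2 ∂(μ₀.prod μ₁)
      else ⊤)

def QOT {d : ℕ} (μ₀ μ₁ : Measure (Euc d)) (ε : ℝ) : ℝ := (QOTE μ₀ μ₁ ε).toReal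

/-- `H^{d-1}(S^{d-1})`. -/
def sphArea (d : ℕ) : ℝ := (μH[(d : ℝ) - 1] (Metric.sphere (0 : Euc d) 1)).toReal

/-- Hessian quadratic form `⟪v, ∇²f(x) v⟫`. -/
def hessQ {d : ℕ} (f : Euc d → ℝ) (x v : Euc d) : ℝ :=
  ⟪v, fderiv ℝ (gradient f) x v⟫

/-- Bregman divergence `D(x,y) = g*(x) + g(y) - ⟪x,y⟫`. -/
def breg {d : ℕ} (g : Euc d → ℝ) (x y : Euc d) : ℝ :=
  lconj g x + g y - ⟪x, y⟫

/-- `C_d = 2^{(d+2)/2} H^{d-1}(S^{d-1}) / (d(d+2))`. -/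
def CdC (d : ℕ) : ℝ := 2 ^ (((d : ℝ) + 2) / 2) * sphArea d / ((d : ℝ) * ((d : ℝ) + 2))

/-- `C_ε(x) = ε^{2/(d+2)} C_d^{-2/(d+2)} (ρ₀(x) ρ₁(∇g*(x)))^{-1/(d+2)}`. -/
def CepsF {d : ℕ} (ρ₀ ρ₁ g : Euc d → ℝ) (ε : ℝ) (x : Euc d) : ℝ :=
  ε ^ ((2 : ℝ) / ((d : ℝ) + 2)) * CdC d ^ (-(2 : ℝ) / ((d : ℝ) + 2)) *
    (ρ₀ x * ρ₁ (gradient (lconj g) x)) ^ (-(1 : ℝ) / ((d : ℝ) + 2))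

/-- `m_ε(x,x')`. -/
def mEpsF {d : ℕ} (ρ₀ ρ₁ g : Euc d → ℝ) (ε : ℝ) (x x' : Euc d) : ℝ :=
  (1 / (2 * ε)) * max (CepsF ρ₀ ρ₁ g ε x + CepsF ρ₀ ρ₁ g ε x'
    - (1 / 2) * hessQ (lconj g) x (x - x') - (1 / 2) * hessQ (lconj g) x' (x - x')) 0

/-- `Ω^δ`, the points of `Ω` at distance `> δ` from the boundary. -/
def intSet {d : ℕ} (Ω : Set (Euc d)) (δ : ℝ) : Set (Euc d) :=
  {x ∈ Ω | δ < Metric.infDist x (frontier Ω)}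

/-- `Ω^{δ,c}`, the points of `Ω` at distance `≤ δ` from the boundary. -/
def frameSet {d : ℕ} (Ω : Set (Euc d)) (δ : ℝ) : Set (Euc d) :=
  {x ∈ Ω | Metric.infDist x (frontier Ω) ≤ δ}

/-- Standing assumptions (Assumption 1 of the paper). -/
structure Standing {d : ℕ} (Ω₀ Ω₁ : Set (Euc d)) (ρ₀ ρ₁ g : Euc d → ℝ) : Prop where
  hd : 1 ≤ d
  open₀ : IsOpen Ω₀
  open₁ : IsOpen Ω₁
  bdd₀ : IsBounded Ω₀
  bdd₁ : IsBounded Ω₁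
  cone : ∃ δ₀ > (0 : ℝ), ∃ θ ∈ Set.Ioo (0 : ℝ) Real.pi,
      otConeCond Ω₀ δ₀ θ ∧ otConeCond Ω₁ δ₀ θ
  holder : ∃ β : ℝ≥0, 0 < β ∧ ∃ Cβ : ℝ≥0,
      HolderOnWith Cβ β ρ₀ (closure Ω₀) ∧ HolderOnWith Cβ β ρ₁ (closure Ω₁)
  prob₀ : IsProbabilityMeasure (densM Ω₀ ρ₀)
  prob₁ : IsProbabilityMeasure (densM Ω₁ ρ₁)
  bounds : ∃ lb ub : ℝ, 0 < lb ∧ lb ≤ ub ∧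
      (∀ x ∈ Ω₀, lb ≤ ρ₀ x ∧ ρ₀ x ≤ ub) ∧ (∀ y ∈ Ω₁, lb ≤ ρ₁ y ∧ ρ₁ y ≤ ub)
  gconv : ConvexOn ℝ Ω₁ g
  gpush : (densM Ω₁ ρ₁).map (gradient g) = densM Ω₀ ρ₀
  gsmooth : ContDiffOn ℝ 2 g Ω₁
  gholder : ∃ α : ℝ≥0, 0 < α ∧ α < 1 ∧ ∃ Cα : ℝ≥0,
      HolderOnWith Cα α (fderiv ℝ (gradient g)) Ω₁
  ghess : ∃ σm σM : ℝ, 0 < σm ∧ σm ≤ σM ∧ ∀ y ∈ Ω₁, ∀ v : Euc d,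
      σm * ‖v‖ ^ 2 ≤ hessQ g y v ∧ hessQ g y v ≤ σM * ‖v‖ ^ 2
  conjsmooth : ContDiffOn ℝ 2 (lconj g) Ω₀
  conjpush : (densM Ω₀ ρ₀).map (gradient (lconj g)) = densM Ω₁ ρ₁

/-!
Write `y = ∇g*(x)` and `y' = ∇g*(x')`. First, `g*` is finite on `Ω₀`: it is continuous there,
and off its effective domain it takes the junk value `0`, which would make `∇g*` vanish on an open
set and give the push-forward `ρ₁` an atom. Next, `∇g*` maps `Ω₀` into `Ω₁`: a value outside
`closure Ω₁` would carry mass outside `Ω₁`, and a boundary value would be a local maximum of a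
separating functional composed with `∇g*`, so the symmetric Jacobian `∇²g*` would be singular there
and `∇g*` would squeeze a small ball into a set too small to carry its mass. A maximizing sequence
for the supremum defining `g*(x)` is bounded and its limit points are `∇g*(x)`, so the supremum is
attained at `y` and `∇g(y) = x`. Hence `D(x, y') ≥ g(y') - g(y) - ⟪∇g(y), y' - y⟫ ≥ σ_m/2 ‖y' - y‖²`
by strong convexity, while the density lower bound gives `C_ε(x) ≤ K ε^{2/(d+2)}`; so
`‖y - y'‖ ≲ ε^{1/(d+2)}`, and `‖x - x'‖ = ‖∇g(y) - ∇g(y')‖ ≤ σ_M ‖y - y'‖`.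
-/

theorem add_le_of_hasDerivAt_of_nonneg {φ φ' φ'' : ℝ → ℝ}
    (hφ : ∀ t ∈ Icc (0 : ℝ) 1, HasDerivAt φ (φ' t) t)
    (hφ' : ∀ t ∈ Icc (0 : ℝ) 1, HasDerivAt φ' (φ'' t) t)
    (hφ'' : ∀ t ∈ Icc (0 : ℝ) 1, 0 ≤ φ'' t) : φ 0 + φ' 0 ≤ φ 1 := by
  have hmono : MonotoneOn φ' (Icc 0 1) :=
    monotoneOn_of_hasDerivWithinAt_nonneg (convex_Icc 0 1)
      (fun t ht => (hφ' t ht).continuousAt.continuousWithinAt)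
      (fun t ht => (hφ' t (interior_subset ht)).hasDerivWithinAt)
      (fun t ht => hφ'' t (interior_subset ht))
  have key := (convex_Icc (0 : ℝ) 1).mul_sub_le_image_sub_of_le_deriv
    (fun t ht => (hφ t ht).continuousAt.continuousWithinAt)
    (fun t ht => (hφ t (interior_subset ht)).differentiableAt.differentiableWithinAt)
    (C := φ' 0) (fun t ht => by
      rw [(hφ t (interior_subset ht)).deriv]
      rw [interior_Icc] at ht
      exact hmono (left_mem_Icc.2 zero_le_one) (Ioo_subset_Icc_self ht) ht.1.le)
    0 (left_mem_Icc.2 zero_le_one) 1 (right_mem_Icc.2 zero_le_one) zero_le_one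
  linarith

section Calculus

variable {E : Type*} [NormedAddCommGroup E] [InnerProductSpace ℝ E] [CompleteSpace E]
  {f : E → ℝ} {s : Set E} {x : E}

theorem ContDiffOn.contDiffOn_gradient (hf : ContDiffOn ℝ 2 f s) (hs : IsOpen s) :
    ContDiffOn ℝ 1 (gradient f) s :=
  (InnerProductSpace.toDual ℝ E).symm.contDiff.comp_contDiffOn
    (hf.fderiv_of_isOpen hs (by norm_num))

theorem ContDiffOn.hasFDerivAt_gradient (hf : ContDiffOn ℝ 2 f s) (hs : IsOpen s) (hx : x ∈ s) :
    HasFDerivAt (gradient f) (fderiv ℝ (gradient f) x) x :=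
  (((hf.contDiffOn_gradient hs).differentiableOn one_ne_zero).differentiableAt
    (hs.mem_nhds hx)).hasFDerivAt

theorem ContDiffOn.continuousOn_fderiv_gradient (hf : ContDiffOn ℝ 2 f s) (hs : IsOpen s) :
    ContinuousOn (fderiv ℝ (gradient f)) s :=
  ((hf.contDiffOn_gradient hs).fderiv_of_isOpen hs
    (by norm_num : (0 : WithTop ℕ∞) + 1 ≤ 1)).continuousOn

theorem ContDiffOn.isSymmetric_fderiv_gradient (hf : ContDiffOn ℝ 2 f s) (hs : IsOpen s)
    (hx : x ∈ s) : (fderiv ℝ (gradient f) x : E →ₗ[ℝ] E).IsSymmetric := by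
  have hsymm := (hf.contDiffAt (hs.mem_nhds hx)).isSymmSndFDerivAt (by simp)
  have hdf : HasFDerivAt (fderiv ℝ f) (fderiv ℝ (fderiv ℝ f) x) x :=
    (((hf.fderiv_of_isOpen hs (by norm_num : (1 : WithTop ℕ∞) + 1 ≤ 2)).differentiableOn
      one_ne_zero).differentiableAt (hs.mem_nhds hx)).hasFDerivAt
  have hgrad : ∀ u, fderiv ℝ (gradient f) x u =
      (InnerProductSpace.toDual ℝ E).symm (fderiv ℝ (fderiv ℝ f) x u) := fun u => by
    have hcomp : gradient f =
        (InnerProductSpace.toDual ℝ E).symm.toContinuousLinearEquiv ∘ fderiv ℝ f := rfl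
    rw [hcomp, ((InnerProductSpace.toDual ℝ E).symm.toContinuousLinearEquiv.hasFDerivAt.comp x
      hdf).fderiv]
    rfl
  intro v w
  rw [ContinuousLinearMap.coe_coe, hgrad, hgrad, InnerProductSpace.toDual_symm_apply,
    real_inner_comm, InnerProductSpace.toDual_symm_apply]
  exact hsymm v w

theorem gradient_eq_of_isLocalMin_sub_inner {z : E} (hf : DifferentiableAt ℝ f x)
    (hmin : IsLocalMin (fun w => f w - ⟪w, z⟫) x) : gradient f x = z := by
  have hzero := hmin.hasFDerivAt_eq_zero
    (hf.hasFDerivAt.sub ((hasFDerivAt_id x).inner ℝ (hasFDerivAt_const z x)))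
  refine ext_inner_right ℝ fun v => ?_
  simpa [sub_eq_zero, inner_gradient_left, real_inner_comm] using congrArg (· v) hzero

end Calculus

section Hessian

variable {E : Type*} [NormedAddCommGroup E] [InnerProductSpace ℝ E] {σ : ℝ}

theorem ContinuousLinearMap.norm_le_of_abs_inner_le {A : E →L[ℝ] E}
    (hA : (A : E →ₗ[ℝ] E).IsSymmetric) (hσ₀ : 0 ≤ σ) (hσ : ∀ v, |⟪v, A v⟫| ≤ σ * ‖v‖ ^ 2) :
    ‖A‖ ≤ σ := by
  rw [A.norm_eq_iSup_rayleighQuotient hA]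
  refine ciSup_le fun v => ?_
  rcases eq_or_ne v 0 with rfl | hv
  · simpa using hσ₀
  have hv2 : 0 < ‖v‖ ^ 2 := pow_pos (norm_pos_iff.2 hv) 2
  rw [ContinuousLinearMap.rayleighQuotient, ContinuousLinearMap.reApplyInnerSelf_apply,
    RCLike.re_to_real, abs_div, abs_of_pos hv2, div_le_iff₀ hv2, real_inner_comm]
  exact hσ v

variable [CompleteSpace E] {f : E → ℝ} {s : Set E} {y y' : E}

theorem Convex.add_inner_gradient_add_le (hs : Convex ℝ s) (ho : IsOpen s)
    (hf : ContDiffOn ℝ 2 f s)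
    (hσ : ∀ z ∈ s, ∀ v : E, σ * ‖v‖ ^ 2 ≤ ⟪v, fderiv ℝ (gradient f) z v⟫)
    (hy : y ∈ s) (hy' : y' ∈ s) :
    f y + ⟪gradient f y, y' - y⟫ + σ / 2 * ‖y' - y‖ ^ 2 ≤ f y' := by
  set v := y' - y
  have hmem : ∀ t ∈ Icc (0 : ℝ) 1, y + t • v ∈ s := fun t ht => hs.add_smul_sub_mem hy hy' ht
  have hline : ∀ t : ℝ, HasDerivAt (fun t : ℝ => y + t • v) v t := fun t => by
    simpa using ((hasDerivAt_id t).smul_const v).const_add y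
  have hφ : ∀ t ∈ Icc (0 : ℝ) 1, HasDerivAt (fun t => f (y + t • v) - σ / 2 * ‖v‖ ^ 2 * t ^ 2)
      (⟪gradient f (y + t • v), v⟫ - σ * ‖v‖ ^ 2 * t) t := fun t ht => by
    have hfd := ((hf.differentiableOn (by norm_num)).differentiableAt
      (ho.mem_nhds (hmem t ht))).hasFDerivAt.comp_hasDerivAt t (hline t)
    rw [← inner_gradient_left] at hfd
    exact (hfd.sub ((hasDerivAt_pow 2 t).const_mul (σ / 2 * ‖v‖ ^ 2))).congr_deriv
      (by norm_num; ring)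
  have hφ' : ∀ t ∈ Icc (0 : ℝ) 1,
      HasDerivAt (fun t => ⟪gradient f (y + t • v), v⟫ - σ * ‖v‖ ^ 2 * t)
      (⟪v, fderiv ℝ (gradient f) (y + t • v) v⟫ - σ * ‖v‖ ^ 2) t := fun t ht => by
    have hgd := ((hf.hasFDerivAt_gradient ho (hmem t ht)).comp_hasDerivAt t (hline t)).inner ℝ
      (hasDerivAt_const t v)
    refine (hgd.sub ((hasDerivAt_id t).const_mul (σ * ‖v‖ ^ 2))).congr_deriv ?_
    simp [real_inner_comm]
  have key := add_le_of_hasDerivAt_of_nonneg hφ hφ'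
    (fun t ht => sub_nonneg.2 (hσ _ (hmem t ht) v))
  simp only [zero_smul, add_zero, one_smul, v, add_sub_cancel] at key
  linarith

theorem Convex.norm_gradient_sub_le (hs : Convex ℝ s) (ho : IsOpen s) (hf : ContDiffOn ℝ 2 f s)
    (hσ₀ : 0 ≤ σ) (hσ : ∀ z ∈ s, ∀ v : E, |⟪v, fderiv ℝ (gradient f) z v⟫| ≤ σ * ‖v‖ ^ 2)
    (hy : y ∈ s) (hy' : y' ∈ s) :
    ‖gradient f y - gradient f y'‖ ≤ σ * ‖y - y'‖ :=
  hs.norm_image_sub_le_of_norm_hasFDerivWithin_le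
    (fun _ hz => (hf.hasFDerivAt_gradient ho hz).hasFDerivWithinAt)
    (fun z hz => ContinuousLinearMap.norm_le_of_abs_inner_le
      (hf.isSymmetric_fderiv_gradient ho hz) hσ₀ (hσ z hz)) hy' hy

end Hessian

section Jacobian

variable {E : Type*} [NormedAddCommGroup E] [InnerProductSpace ℝ E] [FiniteDimensional ℝ E]

theorem ContinuousLinearMap.det_eq_zero_of_inner_apply_eq_zero {A : E →L[ℝ] E}
    (hA : (A : E →ₗ[ℝ] E).IsSymmetric) {n : E} (hn : n ≠ 0) (h : ∀ v, ⟪n, A v⟫ = 0) :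
    A.det = 0 := by
  have hAn : A n = 0 := by
    rw [← inner_self_eq_zero (𝕜 := ℝ)]
    simpa [ContinuousLinearMap.coe_coe] using (hA n (A n)).trans (h (A n))
  refine LinearMap.det_eq_zero_iff_ker_ne_bot.2 fun hker => hn ?_
  simpa [hker] using (LinearMap.mem_ker (f := (A : E →ₗ[ℝ] E))).2 hAn

variable [MeasurableSpace E] [BorelSpace E] (μ : Measure E) [μ.IsAddHaarMeasure]

theorem exists_closedBall_addHaar_image_le {T : E → E} {T' : E → E →L[ℝ] E} {x₀ : E}
    {U : Set E} (hU : U ∈ 𝓝 x₀) (hT : ∀ x ∈ U, HasFDerivAt T (T' x) x)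
    (hT' : ContinuousAt T' x₀) (hdet : (T' x₀).det = 0) {δ : ℝ} (hδ : 0 < δ) :
    ∃ r > 0, closedBall x₀ r ⊆ U ∧
      μ (T '' closedBall x₀ r) ≤ ENNReal.ofReal δ * μ (closedBall x₀ r) := by
  have hsmall : ∀ᶠ x in 𝓝 x₀, |(T' x).det| < δ := by
    have := (ContinuousLinearMap.continuous_det.continuousAt.comp hT').abs
    exact this.eventually_lt_const (by simpa [Function.comp, hdet] using hδ)
  obtain ⟨r, hr, hball⟩ := nhds_basis_closedBall.mem_iff.1 (inter_mem hU hsmall)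
  refine ⟨r, hr, fun x hx => (hball hx).1, ?_⟩
  calc μ (T '' closedBall x₀ r)
      ≤ ∫⁻ x in closedBall x₀ r, ENNReal.ofReal |(T' x).det| ∂μ :=
        addHaar_image_le_lintegral_abs_det_fderiv μ measurableSet_closedBall
          fun x hx => (hT x (hball hx).1).hasFDerivWithinAt
    _ ≤ ∫⁻ _ in closedBall x₀ r, ENNReal.ofReal δ ∂μ :=
        setLIntegral_mono measurable_const fun x hx => ENNReal.ofReal_le_ofReal (hball hx).2.le
    _ = ENNReal.ofReal δ * μ (closedBall x₀ r) := setLIntegral_const _ _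

end Jacobian

section Density

variable {d : ℕ} {Ω Ω₀ Ω₁ V A : Set (Euc d)} {ρ ρ₀ ρ₁ : Euc d → ℝ} {lb ub : ℝ}

theorem ofReal_mul_volume_le_densM (hlb : ∀ x ∈ Ω, lb ≤ ρ x) (hA : MeasurableSet A)
    (hAΩ : A ⊆ Ω) : ENNReal.ofReal lb * volume A ≤ densM Ω ρ A := by
  rw [densM, withDensity_apply _ hA, Measure.restrict_restrict hA, inter_eq_self_of_subset_left hAΩ,
    ← setLIntegral_const]
  exact setLIntegral_mono' hA fun x hx => ENNReal.ofReal_le_ofReal (hlb x (hAΩ hx))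

theorem densM_le_ofReal_mul_volume (hΩ : MeasurableSet Ω) (hub : ∀ x ∈ Ω, ρ x ≤ ub)
    (hA : MeasurableSet A) : densM Ω ρ A ≤ ENNReal.ofReal ub * volume (A ∩ Ω) := by
  rw [densM, withDensity_apply _ hA, Measure.restrict_restrict hA, ← setLIntegral_const]
  exact setLIntegral_mono' (hA.inter hΩ) fun x hx => ENNReal.ofReal_le_ofReal (hub x hx.2)

theorem ofReal_mul_volume_le_of_map_densM_eq {T : Euc d → Euc d}
    (hT : (densM Ω₀ ρ₀).map T = densM Ω₁ ρ₁) (hTm : AEMeasurable T (densM Ω₀ ρ₀))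
    (hΩ₁ : MeasurableSet Ω₁) (hlb : ∀ x ∈ Ω₀, lb ≤ ρ₀ x) (hub : ∀ y ∈ Ω₁, ρ₁ y ≤ ub)
    (hV : MeasurableSet V) (hVΩ : V ⊆ Ω₀) (hA : MeasurableSet A) (hVA : MapsTo T V A) :
    ENNReal.ofReal lb * volume V ≤ ENNReal.ofReal ub * volume (A ∩ Ω₁) :=
  calc ENNReal.ofReal lb * volume V ≤ densM Ω₀ ρ₀ V := ofReal_mul_volume_le_densM hlb hV hVΩ
    _ ≤ densM Ω₀ ρ₀ (T ⁻¹' A) := measure_mono hVA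
    _ = densM Ω₁ ρ₁ A := by rw [← hT, Measure.map_apply_of_aemeasurable hTm hA]
    _ ≤ ENNReal.ofReal ub * volume (A ∩ Ω₁) := densM_le_ofReal_mul_volume hΩ₁ hub hA

end Density

theorem inner_sub_add_mul_norm_le {E : Type*} [NormedAddCommGroup E] [InnerProductSpace ℝ E]
    {x z : E} {r c M : ℝ} (hr : 0 ≤ r) (h : ∀ w ∈ closedBall x r, ⟪w, z⟫ - c ≤ M) :
    ⟪x, z⟫ - c + r * ‖z‖ ≤ M := by
  rcases eq_or_ne z 0 with rfl | hz
  · simpa using h x (mem_closedBall_self hr)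
  have hz' : ‖z‖ ≠ 0 := norm_ne_zero_iff.2 hz
  have hw : x + (r / ‖z‖) • z ∈ closedBall x r := by
    rw [mem_closedBall, dist_self_add_left, norm_smul, Real.norm_eq_abs,
      abs_of_nonneg (by positivity), div_mul_cancel₀ _ hz']
  have := h _ hw
  rw [inner_add_left, real_inner_smul_left, real_inner_self_eq_norm_sq, div_mul_eq_mul_div,
    pow_two, ← mul_assoc, mul_div_cancel_right₀ _ hz'] at this
  linarith

section Legendre

variable {d : ℕ} {g : Euc d → ℝ} {x : Euc d} {U : Set (Euc d)}

def lconjDom (g : Euc d → ℝ) : Set (Euc d) :=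
  {x | BddAbove (range fun y => ⟪x, y⟫ - g y)}

theorem inner_sub_le_lconj (hx : x ∈ lconjDom g) (z : Euc d) : ⟪x, z⟫ - g z ≤ lconj g x :=
  le_csSup hx ⟨z, rfl⟩

theorem mem_lconjDom_of_mem_closure (hc : ContinuousAt (lconj g) x)
    (hx : x ∈ closure (lconjDom g)) : x ∈ lconjDom g := by
  refine ⟨lconj g x, ?_⟩
  rintro _ ⟨z, rfl⟩
  exact ContinuousWithinAt.closure_le hx
    ((continuous_id.inner continuous_const).sub continuous_const).continuousWithinAt
    hc.continuousWithinAt fun w hw => inner_sub_le_lconj hw z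

theorem exists_tendsto_lconj (hU : IsOpen U) (hdom : U ⊆ lconjDom g)
    (hc : ContinuousOn (lconj g) U) (hx : x ∈ U) :
    ∃ y : ℕ → Euc d, ∃ z, Tendsto y atTop (𝓝 z) ∧
      Tendsto (fun n => ⟪x, y n⟫ - g (y n)) atTop (𝓝 (lconj g x)) := by
  obtain ⟨r, hr, hball⟩ := nhds_basis_closedBall.mem_iff.1 (hU.mem_nhds hx)
  obtain ⟨M, hM⟩ := (isCompact_closedBall x r).bddAbove_image (hc.mono hball)
  obtain ⟨u, hmono, hlim, hmem⟩ := exists_seq_tendsto_sSup (range_nonempty _) (hdom hx)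
  choose y hy using hmem
  -- A maximizing sequence stays bounded because `g*` is bounded above near `x`.
  have hbound : ∀ n, y n ∈ closedBall 0 ((M - u 0) / r) := fun n => by
    have := inner_sub_add_mul_norm_le hr.le fun w hw =>
      (inner_sub_le_lconj (hdom (hball hw)) (y n)).trans (hM (mem_image_of_mem _ hw))
    rw [mem_closedBall_zero_iff, le_div_iff₀ hr]
    linarith [hy n, hmono (Nat.zero_le n)]
  obtain ⟨z, -, ψ, hψ, hlimψ⟩ := (isCompact_closedBall 0 _).tendsto_subseq hbound
  refine ⟨y ∘ ψ, z, hlimψ, ?_⟩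
  exact (hlim.comp hψ.tendsto_atTop).congr fun n => (hy (ψ n)).symm

theorem gradient_lconj_eq_of_tendsto (hU : U ∈ 𝓝 x) (hdom : U ⊆ lconjDom g)
    (hd : DifferentiableAt ℝ (lconj g) x) {y : ℕ → Euc d} {z : Euc d}
    (hy : Tendsto y atTop (𝓝 z))
    (hv : Tendsto (fun n => ⟪x, y n⟫ - g (y n)) atTop (𝓝 (lconj g x))) :
    gradient (lconj g) x = z := by
  refine gradient_eq_of_isLocalMin_sub_inner hd ?_
  filter_upwards [hU] with w hw
  have hlim : Tendsto (fun n => ⟪w - x, y n⟫ + (⟪x, y n⟫ - g (y n))) atTop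
      (𝓝 (⟪w - x, z⟫ + lconj g x)) :=
    (((continuous_const.inner continuous_id).tendsto z).comp hy).add hv
  have hle := le_of_tendsto' hlim fun n => by
    rw [inner_sub_left]
    linarith [inner_sub_le_lconj (hdom hw) (y n)]
  rw [inner_sub_left] at hle
  linarith

theorem gradient_gradient_lconj (hU : IsOpen U) (hdom : U ⊆ lconjDom g)
    (hd : DifferentiableOn ℝ (lconj g) U) (hx : x ∈ U)
    (hg : DifferentiableAt ℝ g (gradient (lconj g) x)) :
    gradient g (gradient (lconj g) x) = x := by
  obtain ⟨y, z, hy, hv⟩ := exists_tendsto_lconj hU hdom hd.continuousOn hx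
  obtain rfl := gradient_lconj_eq_of_tendsto (hU.mem_nhds hx) hdom
    (hd.differentiableAt (hU.mem_nhds hx)) hy hv
  have hmax : ⟪x, gradient (lconj g) x⟫ - g (gradient (lconj g) x) = lconj g x :=
    tendsto_nhds_unique ((((continuous_const.inner continuous_id).tendsto _).comp hy).sub
      (hg.continuousAt.tendsto.comp hy)) hv
  refine gradient_eq_of_isLocalMin_sub_inner hg (Eventually.of_forall fun w => ?_)
  have := inner_sub_le_lconj (hdom hx) w
  simp only [real_inner_comm x] at this hmax ⊢
  linarith

end Legendre

section Standing

variable {d : ℕ} {Ω₀ Ω₁ V A : Set (Euc d)} {ρ₀ ρ₁ g : Euc d → ℝ} {x : Euc d}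

theorem Standing.aemeasurable_gradient_lconj (h : Standing Ω₀ Ω₁ ρ₀ ρ₁ g) :
    AEMeasurable (gradient (lconj g)) (densM Ω₀ ρ₀) := by
  by_contra hT
  have := h.prob₁.measure_univ
  rw [← h.conjpush, Measure.map_of_not_aemeasurable hT] at this
  simp at this

theorem Standing.eq_empty_of_mapsTo_null (h : Standing Ω₀ Ω₁ ρ₀ ρ₁ g) (hV : IsOpen V)
    (hVΩ : V ⊆ Ω₀) (hA : MeasurableSet A) (hA₀ : volume (A ∩ Ω₁) = 0)
    (hVA : MapsTo (gradient (lconj g)) V A) : V = ∅ := by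
  obtain ⟨lb, ub, hlb, -, hb₀, hb₁⟩ := h.bounds
  have := ofReal_mul_volume_le_of_map_densM_eq h.conjpush h.aemeasurable_gradient_lconj
    h.open₁.measurableSet (fun x hx => (hb₀ x hx).1) (fun y hy => (hb₁ y hy).2)
    hV.measurableSet hVΩ hA hVA
  rw [hA₀, mul_zero, nonpos_iff_eq_zero, mul_eq_zero, ENNReal.ofReal_eq_zero] at this
  exact (hV.measure_eq_zero_iff volume).1 (this.resolve_left hlb.not_ge)

theorem Standing.subset_lconjDom (h : Standing Ω₀ Ω₁ ρ₀ ρ₁ g) : Ω₀ ⊆ lconjDom g := by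
  intro x hx
  refine mem_lconjDom_of_mem_closure
    (h.conjsmooth.continuousOn.continuousAt (h.open₀.mem_nhds hx)) (by_contra fun hcl => ?_)
  have : NeZero d := ⟨by have := h.hd; omega⟩
  have hopen : IsOpen (Ω₀ \ closure (lconjDom g)) := h.open₀.sdiff isClosed_closure
  -- Off the effective domain `lconj g` is the junk value `sSup` of an unbounded set, i.e. `0`.
  have hzero : MapsTo (gradient (lconj g)) (Ω₀ \ closure (lconjDom g)) {0} := fun w hw => by
    have hloc : lconj g =ᶠ[𝓝 w] fun _ => 0 := by
      filter_upwards [hopen.mem_nhds hw] with u hu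
      exact Real.sSup_of_not_bddAbove fun hb => hu.2 (subset_closure hb)
    rw [mem_singleton_iff, hloc.gradient_eq, gradient_fun_const]
  have := h.eq_empty_of_mapsTo_null hopen sdiff_subset (measurableSet_singleton 0)
    (measure_mono_null inter_subset_left (measure_singleton 0)) hzero
  exact this.subset ⟨hx, hcl⟩

theorem Standing.mapsTo_closure (h : Standing Ω₀ Ω₁ ρ₀ ρ₁ g) :
    MapsTo (gradient (lconj g)) Ω₀ (closure Ω₁) := by
  intro x hx
  by_contra hc
  have := h.eq_empty_of_mapsTo_null
    ((h.conjsmooth.contDiffOn_gradient h.open₀).continuousOn.isOpen_inter_preimage h.open₀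
      isClosed_closure.isOpen_compl)
    inter_subset_left isClosed_closure.isOpen_compl.measurableSet
    (by rw [(disjoint_compl_left_iff_subset.2 subset_closure).inter_eq, measure_empty])
    fun _ hw => hw.2
  exact this.subset ⟨hx, hc⟩

theorem Standing.det_fderiv_gradient_lconj_eq_zero (h : Standing Ω₀ Ω₁ ρ₀ ρ₁ g) (hx : x ∈ Ω₀)
    (hT : gradient (lconj g) x ∉ Ω₁) : (fderiv ℝ (gradient (lconj g)) x).det = 0 := by
  obtain ⟨f, hf⟩ := geometric_hahn_banach_open_point h.gconv.1 h.open₁ hT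
  have hmax : IsLocalMax (f ∘ gradient (lconj g)) x := by
    filter_upwards [h.open₀.mem_nhds hx] with w hw
    exact closure_minimal (fun u hu => (hf u hu).le) (isClosed_le f.continuous continuous_const)
      (h.mapsTo_closure hw)
  have hzero := hmax.hasFDerivAt_eq_zero
    (f.hasFDerivAt.comp x (h.conjsmooth.hasFDerivAt_gradient h.open₀ hx))
  obtain ⟨a, ha⟩ := closure_nonempty_iff.1 ⟨_, h.mapsTo_closure hx⟩
  refine ContinuousLinearMap.det_eq_zero_of_inner_apply_eq_zero
    (h.conjsmooth.isSymmetric_fderiv_gradient h.open₀ hx)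
    (n := (InnerProductSpace.toDual ℝ (Euc d)).symm f) (fun hn => ?_) fun v => ?_
  · have := hf a ha
    rw [(InnerProductSpace.toDual ℝ (Euc d)).symm.map_eq_zero_iff.1 hn] at this
    exact this.false
  · rw [InnerProductSpace.toDual_symm_apply]
    exact congrArg (· v) hzero

theorem Standing.mapsTo_gradient_lconj (h : Standing Ω₀ Ω₁ ρ₀ ρ₁ g) :
    MapsTo (gradient (lconj g)) Ω₀ Ω₁ := by
  intro x hx
  by_contra hT
  obtain ⟨lb, ub, hlb, hlbub, hb₀, hb₁⟩ := h.bounds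
  have hub : 0 < ub := hlb.trans_le hlbub
  -- The Jacobian of `∇g*` degenerates at `x`, so `∇g*` shrinks a small ball by more than the
  -- ratio `lb / ub` that the density bounds allow.
  obtain ⟨r, hr, hball, hvol⟩ := exists_closedBall_addHaar_image_le volume
    (h.open₀.mem_nhds hx) (fun w hw => h.conjsmooth.hasFDerivAt_gradient h.open₀ hw)
    ((h.conjsmooth.continuousOn_fderiv_gradient h.open₀).continuousAt (h.open₀.mem_nhds hx))
    (h.det_fderiv_gradient_lconj_eq_zero hx hT) (δ := lb / (2 * ub)) (by positivity)
  have hcompact : IsCompact (gradient (lconj g) '' closedBall x r) :=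
    (isCompact_closedBall x r).image_of_continuousOn
      ((h.conjsmooth.contDiffOn_gradient h.open₀).continuousOn.mono hball)
  have htransfer := ofReal_mul_volume_le_of_map_densM_eq h.conjpush
    h.aemeasurable_gradient_lconj h.open₁.measurableSet (fun x hx => (hb₀ x hx).1)
    (fun y hy => (hb₁ y hy).2) measurableSet_closedBall hball hcompact.measurableSet
    (mapsTo_image _ _)
  have hB₀ : volume (closedBall x r) ≠ 0 := (measure_closedBall_pos volume x hr).ne'
  have hB : volume (closedBall x r) ≠ ⊤ := measure_closedBall_lt_top.ne
  have : ENNReal.ofReal lb * volume (closedBall x r) ≤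
      ENNReal.ofReal (lb / 2) * volume (closedBall x r) :=
    calc _ ≤ ENNReal.ofReal ub * volume (gradient (lconj g) '' closedBall x r) :=
          htransfer.trans (by gcongr; exact inter_subset_left)
      _ ≤ ENNReal.ofReal ub * (ENNReal.ofReal (lb / (2 * ub)) * volume (closedBall x r)) := by
          gcongr
      _ = ENNReal.ofReal (lb / 2) * volume (closedBall x r) := by
          rw [← mul_assoc, ← ENNReal.ofReal_mul hub.le]
          field_simp
  rw [ENNReal.mul_le_mul_iff_left hB₀ hB, ENNReal.ofReal_le_ofReal_iff (by positivity)] at this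
  linarith

theorem Standing.gradient_gradient_lconj (h : Standing Ω₀ Ω₁ ρ₀ ρ₁ g) (hx : x ∈ Ω₀) :
    gradient g (gradient (lconj g) x) = x :=
  _root_.gradient_gradient_lconj h.open₀ h.subset_lconjDom
    (h.conjsmooth.differentiableOn (by norm_num)) hx
    ((h.gsmooth.differentiableOn (by norm_num)).differentiableAt
      (h.open₁.mem_nhds (h.mapsTo_gradient_lconj hx)))

theorem Standing.sq_norm_sub_le_breg (h : Standing Ω₀ Ω₁ ρ₀ ρ₁ g) {σ : ℝ} (hσ₀ : 0 < σ)
    (hσ : ∀ y ∈ Ω₁, ∀ v, σ * ‖v‖ ^ 2 ≤ hessQ g y v) (hx : x ∈ Ω₀) {y' : Euc d} (hy' : y' ∈ Ω₁) :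
    ‖y' - gradient (lconj g) x‖ ^ 2 ≤ 2 / σ * breg g x y' := by
  have hconv := h.gconv.1.add_inner_gradient_add_le h.open₁ h.gsmooth hσ
    (h.mapsTo_gradient_lconj hx) hy'
  have hfenchel := inner_sub_le_lconj (h.subset_lconjDom hx) (gradient (lconj g) x)
  rw [h.gradient_gradient_lconj hx, inner_sub_right] at hconv
  rw [breg, div_mul_eq_mul_div, le_div_iff₀ hσ₀]
  linarith

theorem Standing.norm_sub_le_mul_norm_gradient_lconj_sub (h : Standing Ω₀ Ω₁ ρ₀ ρ₁ g) {σ : ℝ}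
    (hσ₀ : 0 ≤ σ) (hσ : ∀ y ∈ Ω₁, ∀ v, |hessQ g y v| ≤ σ * ‖v‖ ^ 2) (hx : x ∈ Ω₀) {x' : Euc d}
    (hx' : x' ∈ Ω₀) : ‖x - x'‖ ≤ σ * ‖gradient (lconj g) x - gradient (lconj g) x'‖ := by
  have := h.gconv.1.norm_gradient_sub_le h.open₁ h.gsmooth hσ₀ hσ
    (h.mapsTo_gradient_lconj hx) (h.mapsTo_gradient_lconj hx')
  rwa [h.gradient_gradient_lconj hx, h.gradient_gradient_lconj hx'] at this

end Standing

theorem CdC_nonneg (d : ℕ) : 0 ≤ CdC d :=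
  div_nonneg (mul_nonneg (by positivity) ENNReal.toReal_nonneg) (by positivity)

theorem CepsF_le {d : ℕ} {ρ₀ ρ₁ g : Euc d → ℝ} {ε lb : ℝ} {x : Euc d} (hε : 0 ≤ ε) (hlb : 0 < lb)
    (h₀ : lb ≤ ρ₀ x) (h₁ : lb ≤ ρ₁ (gradient (lconj g) x)) :
    CepsF ρ₀ ρ₁ g ε x ≤
      CdC d ^ (-(2 : ℝ) / ((d : ℝ) + 2)) * (lb * lb) ^ (-(1 : ℝ) / ((d : ℝ) + 2)) *
        (ε ^ ((1 : ℝ) / ((d : ℝ) + 2))) ^ 2 := by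
  have hpow : ε ^ ((2 : ℝ) / ((d : ℝ) + 2)) = (ε ^ ((1 : ℝ) / ((d : ℝ) + 2))) ^ 2 := by
    rw [← Real.rpow_mul_natCast hε]
    ring_nf
  calc CepsF ρ₀ ρ₁ g ε x = CdC d ^ (-(2 : ℝ) / ((d : ℝ) + 2)) *
        (ρ₀ x * ρ₁ (gradient (lconj g) x)) ^ (-(1 : ℝ) / ((d : ℝ) + 2)) *
        (ε ^ ((1 : ℝ) / ((d : ℝ) + 2))) ^ 2 := by rw [CepsF, hpow]; ring
    _ ≤ _ := by
      gcongr _ * ?_ * _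
      · exact Real.rpow_nonneg (CdC_nonneg d) _
      · exact Real.rpow_le_rpow_of_nonpos (by positivity)
          (mul_le_mul h₀ h₁ hlb.le (hlb.trans_le h₀).le)
          (div_nonpos_of_nonpos_of_nonneg (by norm_num : -(1 : ℝ) ≤ 0) (by positivity))

/-- Lemma 2.3, first part: the set where `C_ε(x) ≥ D(x, ∇g*(x'))` concentrates on the
diagonal at rate `ε^{1/(d+2)}`. -/
theorem support_concentration {d : ℕ} {Ω₀ Ω₁ : Set (Euc d)} {ρ₀ ρ₁ g : Euc d → ℝ}
    (h : Standing Ω₀ Ω₁ ρ₀ ρ₁ g) :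
    ∃ C > (0 : ℝ), ∃ ε₀ > (0 : ℝ), ∀ ε : ℝ, 0 < ε → ε ≤ ε₀ →
      ∀ x ∈ Ω₀, ∀ x' ∈ Ω₀, breg g x (gradient (lconj g) x') ≤ CepsF ρ₀ ρ₁ g ε x →
        ‖x - x'‖ ≤ C * ε ^ ((1 : ℝ) / ((d : ℝ) + 2)) := by
  obtain ⟨lb, ub, hlb, -, hb₀, hb₁⟩ := h.bounds
  obtain ⟨σm, σM, hσm, hσmM, hσ⟩ := h.ghess
  have hσM : 0 ≤ σM := hσm.le.trans hσmM
  set K := CdC d ^ (-(2 : ℝ) / ((d : ℝ) + 2)) * (lb * lb) ^ (-(1 : ℝ) / ((d : ℝ) + 2))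
  have hK : 0 ≤ K := mul_nonneg (Real.rpow_nonneg (CdC_nonneg d) _)
    (Real.rpow_nonneg (mul_self_nonneg lb) _)
  refine ⟨σM * √(2 / σm * K) + 1, by positivity, 1, one_pos, fun ε hε _ x hx x' hx' hD => ?_⟩
  set β := ε ^ ((1 : ℝ) / ((d : ℝ) + 2))
  have hβ : 0 ≤ β := by positivity
  have hclose : ‖gradient (lconj g) x - gradient (lconj g) x'‖ ≤ √(2 / σm * K) * β := by
    rw [norm_sub_rev, ← Real.sqrt_sq hβ, ← Real.sqrt_mul (by positivity), mul_assoc]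
    refine Real.le_sqrt_of_sq_le ((h.sq_norm_sub_le_breg hσm (fun y hy v => (hσ y hy v).1) hx
      (h.mapsTo_gradient_lconj hx')).trans ?_)
    gcongr
    exact hD.trans (CepsF_le hε.le hlb (hb₀ x hx).1 (hb₁ _ (h.mapsTo_gradient_lconj hx)).1)
  have hlip := h.norm_sub_le_mul_norm_gradient_lconj_sub hσM
    (fun y hy v => abs_le.2 ⟨by nlinarith [(hσ y hy v).1, sq_nonneg ‖v‖], (hσ y hy v).2⟩) hx hx'
  calc ‖x - x'‖ ≤ σM * (√(2 / σm * K) * β) := hlip.trans (mul_le_mul_of_nonneg_left hclose hσM)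
    _ ≤ (σM * √(2 / σm * K) + 1) * β := by nlinarith
end
end

section
/- Under the standing assumptions, let s: Ω → [a,b] with 0 < a < b < ∞ be a given function, where Ω ⊂ Ω₀ is an open set satisfying the interior cone condition (there exist r₀ > 0 and θ ∈ (0,π) such that every x ∈ Ω is the vertex of a cone of height r₀ and opening angle θ contained in Ω). Then for each ε > 0 there exists a function ψ_ε: Ω → ℝ such that s(x) = (1/ε) ∫_Ω ( ψ_ε(x) − D(x, ∇g*(x')) )_+ dρ₀(x') for all x ∈ Ω. -/
open MeasureTheory Filter Set Metric Bornology
open scoped RealInnerProductSpace ENNReal NNReal Topology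

noncomputable section

/-!
For fixed `x`, the map `t ↦ ∫ (t - D(x, ∇g*(x')))₊ dρ₀(x')` is Lipschitz, vanishes at any
essential lower bound of `x' ↦ D(x, ∇g*(x'))` and is unbounded above, so the intermediate value
theorem yields `ψ_ε(x)` with value `ε s(x)`. The lower bound exists because `∇g*` pushes `ρ₀`
onto `ρ₁`, so `∇g*(x') ∈ Ω₁` for `ρ₀`-a.e. `x'`, and a convex function on the bounded open set
`Ω₁` is bounded below.
-/

section PosPartIntegral

variable {X : Type*} [MeasurableSpace X] {μ : Measure X} {f : X → ℝ} {L : ℝ}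

lemma integral_posPart_sub_eq_zero (hL : ∀ᵐ x ∂μ, L ≤ f x) :
    ∫ x, max (L - f x) 0 ∂μ = 0 :=
  integral_eq_zero_of_ae <| hL.mono fun _ hx => max_eq_right (sub_nonpos.mpr hx)

variable [IsFiniteMeasure μ]

lemma integrable_posPart_sub (hf : AEMeasurable f μ) (hL : ∀ᵐ x ∂μ, L ≤ f x) (t : ℝ) :
    Integrable (fun x => max (t - f x) 0) μ := by
  refine (integrable_const (max (t - L) 0)).mono' ?_ ?_
  · exact ((aemeasurable_const.sub hf).max aemeasurable_const).aestronglyMeasurable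
  · filter_upwards [hL] with x hx
    rw [Real.norm_of_nonneg (le_max_right _ _)]
    gcongr

lemma lipschitzWith_integral_posPart_sub (hf : AEMeasurable f μ) (hL : ∀ᵐ x ∂μ, L ≤ f x) :
    LipschitzWith (μ.real univ).toNNReal fun t => ∫ x, max (t - f x) 0 ∂μ := by
  refine LipschitzWith.of_dist_le_mul fun t₁ t₂ => ?_
  rw [dist_eq_norm, ← integral_sub (integrable_posPart_sub hf hL t₁)
    (integrable_posPart_sub hf hL t₂), Real.coe_toNNReal _ measureReal_nonneg, mul_comm]
  refine norm_integral_le_of_norm_le_const (Eventually.of_forall fun x => ?_)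
  simpa [Real.dist_eq] using abs_max_sub_max_le_abs (t₁ - f x) (t₂ - f x) 0

lemma exists_le_integral_posPart_sub (hf : AEMeasurable f μ) (hL : ∀ᵐ x ∂μ, L ≤ f x)
    (hμ : μ ≠ 0) (c : ℝ) : ∃ t, L ≤ t ∧ c ≤ ∫ x, max (t - f x) 0 ∂μ := by
  set A : ℕ → Set X := fun n => {x | hf.mk f x ≤ n}
  obtain ⟨N, hN⟩ : ∃ N, μ (A N) ≠ 0 := by
    by_contra! hA
    have hcover : ⋃ n, A n = univ :=
      eq_univ_of_forall fun x => mem_iUnion.mpr (exists_nat_ge (hf.mk f x))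
    exact hμ (Measure.measure_univ_eq_zero.mp (hcover ▸ measure_iUnion_null hA))
  have hA : 0 < μ.real (A N) := ENNReal.toReal_pos hN (measure_ne_top _ _)
  refine ⟨max L N + |c| / μ.real (A N), ?_, ?_⟩
  · have := div_nonneg (abs_nonneg c) hA.le
    linarith [le_max_left L N]
  set t := max L N + |c| / μ.real (A N)
  have hAm : MeasurableSet (A N) := hf.measurable_mk measurableSet_Iic
  have hind : (A N).indicator (fun _ => t - N) ≤ᵐ[μ] fun x => max (t - f x) 0 := by
    filter_upwards [hf.ae_eq_mk] with x hx
    by_cases hxA : x ∈ A N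
    · have hxN : hf.mk f x ≤ N := hxA
      rw [indicator_of_mem hxA, hx]
      exact le_max_of_le_left (by linarith)
    · rw [indicator_of_notMem hxA]
      exact le_max_right _ _
  calc c ≤ |c| / μ.real (A N) * μ.real (A N) := by
        rw [div_mul_cancel₀ _ hA.ne']; exact le_abs_self c
    _ ≤ (t - N) * μ.real (A N) := by
        gcongr; linarith [le_max_right L (N : ℝ)]
    _ = ∫ x, (A N).indicator (fun _ => t - N) x ∂μ := by
        rw [integral_indicator_const _ hAm, smul_eq_mul, mul_comm]
    _ ≤ ∫ x, max (t - f x) 0 ∂μ :=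
        integral_mono_ae ((integrable_const _).indicator hAm) (integrable_posPart_sub hf hL t) hind

lemma exists_integral_posPart_sub_eq (hf : AEMeasurable f μ) (hL : ∀ᵐ x ∂μ, L ≤ f x)
    (hμ : μ ≠ 0) {c : ℝ} (hc : 0 ≤ c) : ∃ t, ∫ x, max (t - f x) 0 ∂μ = c := by
  obtain ⟨t, hLt, hct⟩ := exists_le_integral_posPart_sub hf hL hμ c
  obtain ⟨t₀, -, ht₀⟩ := intermediate_value_Icc hLt
    (lipschitzWith_integral_posPart_sub hf hL).continuous.continuousOn
    ⟨(integral_posPart_sub_eq_zero hL).trans_le hc, hct⟩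
  exact ⟨t₀, ht₀⟩

end PosPartIntegral

lemma ConvexOn.bddBelow_image_of_isBounded {E : Type*} [NormedAddCommGroup E]
    [NormedSpace ℝ E] [FiniteDimensional ℝ E] {C : Set E} {f : E → ℝ}
    (hf : ConvexOn ℝ C f) (hC : IsBounded C) (hint : (interior C).Nonempty) :
    BddBelow (f '' C) := by
  obtain ⟨y₀, hy₀⟩ := hint
  obtain ⟨r, hr, hball⟩ := Metric.isOpen_iff.mp isOpen_interior y₀ hy₀
  have hK : closedBall y₀ (r / 2) ⊆ interior C :=
    (closedBall_subset_ball (by linarith)).trans hball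
  obtain ⟨M, hM⟩ := (isCompact_closedBall y₀ (r / 2)).bddAbove_image
    (hf.continuousOn_interior.mono hK)
  obtain ⟨R, hR, hCR⟩ := hC.subset_closedBall_lt 0 y₀
  obtain ⟨c, hc, hcR⟩ : ∃ c : ℝ, 0 < c ∧ c * R = r / 2 :=
    ⟨r / (2 * R), by positivity, by field_simp⟩
  refine ⟨((1 + c) * f y₀ - M) / c, forall_mem_image.mpr fun y hy => ?_⟩
  -- reflect `y` through `y₀` into the small ball where `f ≤ M`
  set w := y₀ + c • (y₀ - y)
  have hw : w ∈ closedBall y₀ (r / 2) := by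
    have hyR : ‖y₀ - y‖ ≤ R := by rw [← dist_eq_norm']; exact hCR hy
    rw [mem_closedBall, dist_eq_norm, add_sub_cancel_left, norm_smul,
      Real.norm_of_nonneg hc.le]
    calc c * ‖y₀ - y‖ ≤ c * R := by gcongr
      _ = r / 2 := hcR
  have hcomb : (c / (1 + c)) • y + (1 / (1 + c)) • w = y₀ := by
    match_scalars <;> field_simp; ring
  have hconv : f ((c / (1 + c)) • y + (1 / (1 + c)) • w) ≤
      (c / (1 + c)) • f y + (1 / (1 + c)) • f w :=
    hf.2 hy (interior_subset (hK hw)) (by positivity) (by positivity) (by field_simp; ring)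
  rw [hcomb, smul_eq_mul, smul_eq_mul, div_mul_eq_mul_div, div_mul_eq_mul_div, ← add_div,
    le_div_iff₀ (by positivity)] at hconv
  have hfw : f w ≤ M := hM (mem_image_of_mem f hw)
  rw [div_le_iff₀ hc]
  linarith

lemma measurable_gradient {E : Type*} [NormedAddCommGroup E] [InnerProductSpace ℝ E]
    [CompleteSpace E] [MeasurableSpace E] [BorelSpace E] (f : E → ℝ) :
    Measurable (gradient f) :=
  (InnerProductSpace.toDual ℝ E).symm.continuous.measurable.comp (measurable_fderiv ℝ f)

section DensityMeasure

variable {d : ℕ} {Ω : Set (Euc d)} {ρ : Euc d → ℝ}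

lemma densM_apply_univ : densM Ω ρ univ = ∫⁻ x in Ω, ENNReal.ofReal (ρ x) := by
  rw [densM, withDensity_apply _ MeasurableSet.univ, Measure.restrict_univ]

lemma densM_mono {Ω' : Set (Euc d)} (hΩ : Ω ⊆ Ω') : densM Ω ρ ≤ densM Ω' ρ :=
  calc densM Ω ρ = (densM Ω' ρ).restrict Ω := by
        rw [densM, densM, restrict_withDensity', Measure.restrict_restrict_of_subset hΩ]
    _ ≤ densM Ω' ρ := Measure.restrict_le_self

lemma ae_mem_densM (hΩ : MeasurableSet Ω) : ∀ᵐ x ∂densM Ω ρ, x ∈ Ω :=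
  (withDensity_absolutelyContinuous _ _).ae_le (ae_restrict_mem hΩ)

lemma ContinuousOn.aemeasurable_densM {φ : Euc d → ℝ} (hφ : ContinuousOn φ Ω)
    (hΩ : MeasurableSet Ω) : AEMeasurable φ (densM Ω ρ) :=
  (hφ.aemeasurable hΩ).mono_ac (withDensity_absolutelyContinuous _ _)

lemma isFiniteMeasure_densM (hΩ : MeasurableSet Ω) (hΩb : IsBounded Ω) {ub : ℝ}
    (hρ : ∀ x ∈ Ω, ρ x ≤ ub) : IsFiniteMeasure (densM Ω ρ) := by
  have hvol : volume Ω < ∞ := hΩb.measure_lt_top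
  refine ⟨lt_of_le_of_lt ?_ (ENNReal.mul_lt_top (ENNReal.ofReal_lt_top (r := ub)) hvol)⟩
  rw [densM_apply_univ, ← setLIntegral_const]
  exact setLIntegral_mono' hΩ fun x hx => ENNReal.ofReal_le_ofReal (hρ x hx)

lemma densM_ne_zero (hΩ : IsOpen Ω) (hne : Ω.Nonempty) {lb : ℝ} (hlb : 0 < lb)
    (hρ : ∀ x ∈ Ω, lb ≤ ρ x) : densM Ω ρ ≠ 0 := by
  refine Measure.measure_univ_ne_zero.mp (ne_of_gt (lt_of_lt_of_le
    (ENNReal.mul_pos (ENNReal.ofReal_pos.mpr hlb).ne' (hΩ.measure_pos volume hne).ne') ?_))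
  rw [densM_apply_univ, ← setLIntegral_const]
  exact setLIntegral_mono' hΩ.measurableSet fun x hx => ENNReal.ofReal_le_ofReal (hρ x hx)

lemma integral_densM (hΩ : MeasurableSet Ω) (hρm : AEMeasurable ρ (volume.restrict Ω))
    (hρ : ∀ x ∈ Ω, 0 ≤ ρ x) (φ : Euc d → ℝ) :
    ∫ x, φ x ∂densM Ω ρ = ∫ x in Ω, φ x * ρ x := by
  rw [densM, integral_withDensity_eq_integral_toReal_smul₀ hρm.ennreal_ofReal
    (ae_of_all _ fun _ => ENNReal.ofReal_lt_top)]
  refine setIntegral_congr_fun hΩ fun x hx => ?_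
  rw [ENNReal.toReal_ofReal (hρ x hx), smul_eq_mul, mul_comm]

end DensityMeasure

lemma exists_forall_le_breg {d : ℕ} {g : Euc d → ℝ} {S : Set (Euc d)} (hg : BddBelow (g '' S))
    (hS : IsBounded S) (x : Euc d) : ∃ L, ∀ y ∈ S, L ≤ breg g x y := by
  obtain ⟨m, hm⟩ := hg
  obtain ⟨R, hR⟩ := hS.subset_closedBall 0
  refine ⟨lconj g x + m - ‖x‖ * R, fun y hy => ?_⟩
  have hgy : m ≤ g y := hm (mem_image_of_mem g hy)
  have hxy : ⟪x, y⟫ ≤ ‖x‖ * ‖y‖ := real_inner_le_norm x y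
  have : ‖x‖ * ‖y‖ ≤ ‖x‖ * R := by gcongr; exact mem_closedBall_zero_iff.mp (hR hy)
  rw [breg]
  linarith

namespace Standing

variable {d : ℕ} {Ω₀ Ω₁ : Set (Euc d)} {ρ₀ ρ₁ g : Euc d → ℝ} (h : Standing Ω₀ Ω₁ ρ₀ ρ₁ g)
include h

lemma nonempty₁ : Ω₁.Nonempty := by
  have := h.prob₁
  refine nonempty_iff_ne_empty.mpr fun hΩ₁ => IsProbabilityMeasure.ne_zero (densM Ω₁ ρ₁) ?_
  simp [densM, hΩ₁]

lemma bddBelow_image_g : BddBelow (g '' Ω₁) := by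
  refine h.gconv.bddBelow_image_of_isBounded h.bdd₁ ?_
  rw [h.open₁.interior_eq]
  exact h.nonempty₁

lemma continuousOn_ρ₀ : ContinuousOn ρ₀ (closure Ω₀) := by
  obtain ⟨β, hβ, Cβ, hρ₀, -⟩ := h.holder
  exact hρ₀.continuousOn hβ

variable {Ω : Set (Euc d)} (hΩ : Ω ⊆ Ω₀)
include hΩ

lemma ae_gradient_lconj_mem : ∀ᵐ x' ∂densM Ω ρ₀, gradient (lconj g) x' ∈ Ω₁ :=
  (Measure.absolutelyContinuous_of_le (densM_mono hΩ)).ae_le <| ae_of_ae_map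
    (measurable_gradient _).aemeasurable (h.conjpush ▸ ae_mem_densM h.open₁.measurableSet)

lemma aemeasurable_breg_gradient_lconj (x : Euc d) :
    AEMeasurable (fun x' => breg g x (gradient (lconj g) x')) (densM Ω ρ₀) := by
  have hbreg : AEMeasurable (breg g x) ((densM Ω₀ ρ₀).map (gradient (lconj g))) := by
    rw [h.conjpush]
    refine ContinuousOn.aemeasurable_densM ?_ h.open₁.measurableSet
    exact (continuousOn_const.add h.gsmooth.continuousOn).sub
      (continuous_const.inner continuous_id).continuousOn
  exact (hbreg.comp_measurable (measurable_gradient _)).mono_ac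
    (Measure.absolutelyContinuous_of_le (densM_mono hΩ))

end Standing

theorem exists_fitted_potential_general {d : ℕ} {Ω₀ Ω₁ : Set (Euc d)} {ρ₀ ρ₁ g : Euc d → ℝ}
    (h : Standing Ω₀ Ω₁ ρ₀ ρ₁ g)
    (Ω : Set (Euc d)) (hsub : Ω ⊆ Ω₀) (hopen : IsOpen Ω)
    (a b : ℝ) (ha : 0 < a)
    (s : Euc d → ℝ) (hs : ∀ x ∈ Ω, s x ∈ Set.Icc a b) :
    ∀ ε > (0 : ℝ), ∃ ψ : Euc d → ℝ, ∀ x ∈ Ω,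
      s x = (1 / ε) *
        ∫ x' in Ω, max (ψ x - breg g x (gradient (lconj g) x')) 0 * ρ₀ x' := by
  intro ε hε
  rcases Ω.eq_empty_or_nonempty with rfl | hne
  · exact ⟨0, by simp⟩
  obtain ⟨lb, ub, hlb, -, hρ₀, -⟩ := h.bounds
  have := isFiniteMeasure_densM hopen.measurableSet (h.bdd₀.subset hsub)
    fun x hx => (hρ₀ x (hsub hx)).2
  have key : ∀ x ∈ Ω, ∃ t,
      ∫ x', max (t - breg g x (gradient (lconj g) x')) 0 ∂densM Ω ρ₀ = ε * s x := by
    intro x hx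
    obtain ⟨L, hL⟩ := exists_forall_le_breg h.bddBelow_image_g h.bdd₁ x
    exact exists_integral_posPart_sub_eq (h.aemeasurable_breg_gradient_lconj hsub x)
      ((h.ae_gradient_lconj_mem hsub).mono fun x' hx' => hL _ hx')
      (densM_ne_zero hopen hne hlb fun x hx => (hρ₀ x (hsub hx)).1)
      (mul_nonneg hε.le (ha.le.trans (hs x hx).1))
  choose! ψ hψ using key
  refine ⟨ψ, fun x hx => ?_⟩
  rw [← integral_densM hopen.measurableSet
    ((h.continuousOn_ρ₀.mono (hsub.trans subset_closure)).aemeasurable hopen.measurableSet)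
    (fun x' hx' => hlb.le.trans (hρ₀ x' (hsub hx')).1), hψ x hx]
  field_simp

/-- Lemma 4.1, point 1: existence of the fitted potential `ψ_ε`. -/
theorem exists_fitted_potential {d : ℕ} {Ω₀ Ω₁ : Set (Euc d)} {ρ₀ ρ₁ g : Euc d → ℝ}
    (h : Standing Ω₀ Ω₁ ρ₀ ρ₁ g)
    (Ω : Set (Euc d)) (hsub : Ω ⊆ Ω₀) (hopen : IsOpen Ω)
    (hcone : ∃ r₀ > (0 : ℝ), ∃ θ ∈ Set.Ioo (0 : ℝ) Real.pi, otConeCond Ω r₀ θ)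
    (a b : ℝ) (ha : 0 < a) (hab : a < b)
    (s : Euc d → ℝ) (hs : ∀ x ∈ Ω, s x ∈ Set.Icc a b) :
    ∀ ε > (0 : ℝ), ∃ ψ : Euc d → ℝ, ∀ x ∈ Ω,
      s x = (1 / ε) *
        ∫ x' in Ω, max (ψ x - breg g x (gradient (lconj g) x')) 0 * ρ₀ x' :=
  exists_fitted_potential_general h Ω hsub hopen a b ha s hs
end
end

section
/- Let Ω₀ ⊂ ℝ^d be an open bounded convex set satisfying the interior cone condition (there exist δ' > 0 and θ' ∈ (0,π) such that every x ∈ Ω₀ is the vertex of a cone of height δ' and opening angle θ' contained in Ω₀). Then there exist δ₀ > 0 and θ ∈ (0,π) such that for every δ ≤ δ₀ there is a height r_δ > 0 so that every x ∈ Ω₀^{δ,c} = {x ∈ Ω₀ : dist(x,∂Ω₀) ≤ δ} is the vertex of a cone of height r_δ and opening angle θ contained in Ω₀^{δ,c}. -/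
open MeasureTheory Filter Set Metric Bornology
open scoped RealInnerProductSpace ENNReal NNReal Topology

noncomputable section

/-!
The depth `G = infDist · Ωᶜ` is `1`-Lipschitz, and concave on a convex `Ω`. Fix a centre `z`
of depth `ρ = G z > 0` and a bound `D` for the distances to `z`; a frame point `x` of depth
`G x ≤ δ ≤ ρ / 2` then lies at distance at least `ρ / 2` from `z`. If `G x < δ / 2`, the cone
of aperture `2 arctan c` and small height pointing from `x` towards `z` lies in the convex hull
of `x` and a ball about `z`, and the Lipschitz bound keeps its depth below `δ`. Otherwise the
cone points away from `z` and stays inside the ball of radius `G x` about `x`; along the ray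
from `z` through `x` concavity makes `G` drop at rate at least `(ρ - G x) / ‖x - z‖ ≥ ρ / (2D)`,
which outweighs the sideways spread `c ≤ ρ / (2D)` of the cone.
-/

open Real

theorem infDist_frontier_eq_infDist_compl {E : Type*} [NormedAddCommGroup E] [NormedSpace ℝ E]
    [FiniteDimensional ℝ E] {s : Set E} {x : E} (hx : x ∈ s) :
    infDist x (frontier s) = infDist x sᶜ := by
  rcases eq_or_ne s univ with rfl | hs
  · simp
  obtain ⟨y, hy, hxy⟩ := exists_mem_frontier_infDist_compl_eq_dist hx hs
  refine le_antisymm (hxy ▸ infDist_le_dist_of_mem hy) ?_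
  rw [← infDist_closure (s := sᶜ)]
  exact infDist_le_infDist_of_subset
    (frontier_eq_closure_inter_closure.trans_subset inter_subset_right) ⟨y, hy⟩

theorem frameSet_eq_sep_infDist_compl {d : ℕ} (Ω : Set (Euc d)) (δ : ℝ) :
    frameSet Ω δ = {x ∈ Ω | infDist x Ωᶜ ≤ δ} := by
  ext x
  constructor <;> rintro ⟨hx, hδ⟩ <;> refine ⟨hx, ?_⟩ <;>
    simpa [infDist_frontier_eq_infDist_compl hx] using hδ

section NormedSpace

variable {E : Type*} [NormedAddCommGroup E] [NormedSpace ℝ E] {Ω : Set E}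

theorem Convex.concaveOn_infDist_compl (hΩ : Convex ℝ Ω) :
    ConcaveOn ℝ Ω (infDist · Ωᶜ) := by
  refine ⟨hΩ, fun x hx y hy a b ha hb hab => ?_⟩
  rcases Ωᶜ.eq_empty_or_nonempty with hc | hc
  · simp [hc]
  set S := a * infDist x Ωᶜ + b * infDist y Ωᶜ
  refine (le_infDist hc).2 fun z hz => not_lt.1 fun hlt => hz ?_
  have hS : 0 < S := dist_nonneg.trans_lt hlt
  -- Shifting `x` and `y` proportionally to their depths keeps them in `Ω` and moves
  -- `a • x + b • y` onto `z`.
  set w := z - (a • x + b • y)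
  have shift_mem : ∀ p ∈ Ω, p + (infDist p Ωᶜ / S) • w ∈ Ω := by
    intro p hp
    rcases (infDist_nonneg : 0 ≤ infDist p Ωᶜ).eq_or_lt with h0 | hpos
    · simpa [← h0] using hp
    refine ball_infDist_compl_subset (x := p) ?_
    rw [mem_ball, dist_eq_norm, add_sub_cancel_left, norm_smul,
      Real.norm_of_nonneg (by positivity)]
    calc infDist p Ωᶜ / S * ‖w‖ < infDist p Ωᶜ / S * S := by
          gcongr
          rwa [← dist_eq_norm, dist_comm]
      _ = infDist p Ωᶜ := div_mul_cancel₀ _ hS.ne'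
  convert hΩ (shift_mem x hx) (shift_mem y hy) ha hb hab using 1
  have : a * (infDist x Ωᶜ / S) + b * (infDist y Ωᶜ / S) = 1 := by
    rw [mul_div_assoc', mul_div_assoc', ← add_div, div_self hS.ne']
  simp only [smul_add, smul_smul, w]
  rw [add_add_add_comm, ← add_smul, this, one_smul, add_sub_cancel]

theorem ConcaveOn.le_add_smul_sub {f : E → ℝ} (hf : ConcaveOn ℝ Ω f) {x z : E}
    (hz : z ∈ Ω) {t : ℝ} (ht : 0 ≤ t) (hp : x + t • (x - z) ∈ Ω) :
    f (x + t • (x - z)) ≤ f x - t * (f z - f x) := by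
  have h1t : 0 < 1 + t := by linarith
  have key := hf.2 hp hz (by positivity : 0 ≤ 1 / (1 + t)) (by positivity : 0 ≤ t / (1 + t))
    (by field_simp)
  have hx' : (1 / (1 + t)) • (x + t • (x - z)) + (t / (1 + t)) • z = x := by
    match_scalars <;> field_simp; ring
  rw [hx', smul_eq_mul, smul_eq_mul] at key
  have := mul_le_mul_of_nonneg_left key h1t.le
  field_simp at this
  linarith

theorem Convex.add_smul_sub_add_mem (hΩ : Convex ℝ Ω) {x z w : E} {r t : ℝ} (hx : x ∈ Ω)
    (hz : closedBall z r ⊆ Ω) (ht0 : 0 ≤ t) (ht1 : t ≤ 1) (hw : ‖w‖ ≤ t * r) :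
    x + t • (z - x) + w ∈ Ω := by
  rcases ht0.eq_or_lt with rfl | ht
  · simpa [norm_le_zero_iff.1 (by simpa using hw)] using hx
  have hzw : z + t⁻¹ • w ∈ Ω := hz <| by
    rw [mem_closedBall, dist_eq_norm, add_sub_cancel_left, norm_smul,
      Real.norm_of_nonneg (by positivity)]
    rwa [inv_mul_le_iff₀ ht]
  convert hΩ hx hzw (a := 1 - t) (b := t) (by linarith) ht0 (by ring) using 1
  rw [smul_add, smul_inv_smul₀ ht.ne', smul_sub, sub_smul, one_smul]
  abel

theorem Convex.inward_step_mem_frame (hΩ : Convex ℝ Ω) {x z w : E} {ρ t δ : ℝ} (hx : x ∈ Ω)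
    (hxδ : infDist x Ωᶜ ≤ δ / 2) (hρ : ρ < infDist z Ωᶜ) (ht0 : 0 ≤ t) (ht1 : t ≤ 1)
    (hw : ‖w‖ ≤ t * ρ) (hy : ‖t • (z - x)‖ + ‖w‖ ≤ δ / 2) :
    x + t • (z - x) + w ∈ Ω ∧ infDist (x + t • (z - x) + w) Ωᶜ ≤ δ := by
  refine ⟨hΩ.add_smul_sub_add_mem hx
    ((closedBall_subset_ball hρ).trans ball_infDist_compl_subset) ht0 ht1 hw, ?_⟩
  calc infDist (x + t • (z - x) + w) Ωᶜ
      ≤ infDist x Ωᶜ + dist (x + t • (z - x) + w) x := infDist_le_infDist_add_dist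
    _ ≤ δ / 2 + δ / 2 := by
        gcongr
        rw [dist_eq_norm, add_assoc, add_sub_cancel_left]
        exact (norm_add_le _ _).trans hy
    _ = δ := add_halves δ

theorem Convex.outward_step_mem_frame (hΩ : Convex ℝ Ω) {x z w : E} {ρ t δ : ℝ}
    (hxδ : infDist x Ωᶜ ≤ δ) (hz : z ∈ Ω) (hρ : ρ + δ ≤ infDist z Ωᶜ) (ht : 0 ≤ t)
    (hw : ‖w‖ ≤ t * ρ) (hy : ‖t • (x - z)‖ + ‖w‖ < infDist x Ωᶜ) :
    x + t • (x - z) + w ∈ Ω ∧ infDist (x + t • (x - z) + w) Ωᶜ ≤ δ := by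
  have hball : ∀ y, ‖y‖ < infDist x Ωᶜ → x + y ∈ Ω := fun y hy =>
    ball_infDist_compl_subset (by rwa [mem_ball, dist_eq_norm, add_sub_cancel_left])
  have hp := hball _ ((le_add_of_nonneg_right (norm_nonneg w)).trans_lt hy)
  refine ⟨add_assoc x _ w ▸ hball _ ((norm_add_le _ _).trans_lt hy), ?_⟩
  have hconc := hΩ.concaveOn_infDist_compl.le_add_smul_sub hz ht hp
  calc infDist (x + t • (x - z) + w) Ωᶜ
      ≤ infDist (x + t • (x - z)) Ωᶜ + dist (x + t • (x - z) + w) (x + t • (x - z)) :=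
        infDist_le_infDist_add_dist
    _ ≤ infDist x Ωᶜ - t * (infDist z Ωᶜ - infDist x Ωᶜ) + t * ρ := by
        rw [dist_eq_norm, add_sub_cancel_left]
        exact add_le_add hconc hw
    _ ≤ δ := by nlinarith [mul_nonneg ht (by linarith : 0 ≤ infDist z Ωᶜ - infDist x Ωᶜ - ρ)]

end NormedSpace

section InnerProductSpace

variable {E : Type*} [NormedAddCommGroup E] [InnerProductSpace ℝ E]

theorem norm_sub_inner_smul_le_of_cos_arctan {v u : E} {c : ℝ} (hv : ‖v‖ = 1) (hc : 0 ≤ c)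
    (hu : ‖u‖ * cos (arctan c) ≤ ⟪v, u⟫) : ‖u - ⟪v, u⟫ • v‖ ≤ c * ⟪v, u⟫ := by
  set a := ⟪v, u⟫
  have ha : 0 ≤ a := (mul_nonneg (norm_nonneg _) (cos_arctan_pos c).le).trans hu
  have hpyth : ‖u - a • v‖ ^ 2 = ‖u‖ ^ 2 - a ^ 2 := by
    rw [norm_sub_sq_real, inner_smul_right, real_inner_comm, norm_smul, hv,
      Real.norm_of_nonneg ha]
    ring
  have hcos : cos (arctan c) ^ 2 * (1 + c ^ 2) = 1 := by
    rw [cos_sq_arctan]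
    field_simp
  have hu2 : ‖u‖ ^ 2 ≤ (1 + c ^ 2) * a ^ 2 := by
    nlinarith [pow_le_pow_left₀ (by positivity) hu 2]
  refine (pow_le_pow_iff_left₀ (norm_nonneg _) (by positivity) two_ne_zero).1 ?_
  rw [hpyth]
  nlinarith

theorem exists_smul_add_of_cos_arctan {e u : E} {c : ℝ} (he : e ≠ 0) (hc : 0 ≤ c)
    (hu : ‖u‖ * cos (arctan c) ≤ ⟪‖e‖⁻¹ • e, u⟫) :
    ∃ t : ℝ, ∃ w : E, u = t • e + w ∧ 0 ≤ t ∧ ⟪‖e‖⁻¹ • e, u⟫ = t * ‖e‖ ∧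
      ‖w‖ ≤ c * (t * ‖e‖) := by
  have he' : 0 < ‖e‖ := norm_pos_iff.2 he
  set a := ⟪‖e‖⁻¹ • e, u⟫
  have hte : (a / ‖e‖) • e = a • ‖e‖⁻¹ • e := by rw [smul_smul, div_eq_mul_inv]
  refine ⟨a / ‖e‖, u - a • ‖e‖⁻¹ • e, by rw [hte, add_sub_cancel], ?_,
    (div_mul_cancel₀ _ he'.ne').symm, ?_⟩
  · exact div_nonneg ((mul_nonneg (norm_nonneg _) (cos_arctan_pos c).le).trans hu) he'.le
  · rw [div_mul_cancel₀ _ he'.ne']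
    exact norm_sub_inner_smul_le_of_cos_arctan (norm_smul_inv_norm he) hc hu

theorem Convex.exists_cone_subset_frame {Ω : Set E} (hΩ : Convex ℝ Ω) {z : E} (hz : z ∈ Ω)
    {D : ℝ} (hD : ∀ y ∈ Ω, dist y z ≤ D) {c : ℝ} (hc0 : 0 ≤ c) (hc1 : c ≤ 1)
    (hcD : c * D ≤ infDist z Ωᶜ / 2) {δ : ℝ} (hδ0 : 0 < δ) (hδ : δ ≤ infDist z Ωᶜ / 2)
    {x : E} (hx : x ∈ Ω) (hxδ : infDist x Ωᶜ ≤ δ) :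
    ∃ v : E, ‖v‖ = 1 ∧ ∀ u : E, ‖u‖ * cos (arctan c) ≤ ⟪v, u⟫ → ⟪v, u⟫ ≤ δ / 8 →
      x + u ∈ Ω ∧ infDist (x + u) Ωᶜ ≤ δ := by
  set ρ := infDist z Ωᶜ
  have hxz : ρ / 2 ≤ ‖x - z‖ := by
    have := infDist_le_infDist_add_dist (x := z) (y := x) (s := Ωᶜ)
    rw [dist_comm, dist_eq_norm] at this
    linarith
  have hxzD : ‖x - z‖ ≤ D := dist_eq_norm x z ▸ hD x hx
  have cone : ∀ e u : E, ‖e‖ = ‖x - z‖ → ‖u‖ * cos (arctan c) ≤ ⟪‖e‖⁻¹ • e, u⟫ →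
      ⟪‖e‖⁻¹ • e, u⟫ ≤ δ / 8 → ∃ t : ℝ, ∃ w : E, u = t • e + w ∧ 0 ≤ t ∧ t ≤ 1 ∧
        ‖w‖ ≤ t * (ρ / 2) ∧ ‖t • e‖ + ‖w‖ ≤ δ / 4 := by
    intro e u he hu hua
    have he0 : 0 < ‖e‖ := by linarith
    obtain ⟨t, w, rfl, ht, hta, hw⟩ := exists_smul_add_of_cos_arctan (norm_pos_iff.1 he0) hc0 hu
    have hte : ‖t • e‖ = t * ‖e‖ := by rw [norm_smul, Real.norm_of_nonneg ht]
    refine ⟨t, w, rfl, ht, ?_, ?_, ?_⟩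
    · rw [← mul_le_iff_le_one_left he0, ← hta]
      linarith
    · calc ‖w‖ ≤ t * (c * D) := by rw [he] at hw; nlinarith [mul_le_mul_of_nonneg_left hxzD hc0]
        _ ≤ t * (ρ / 2) := by gcongr
    · nlinarith [mul_nonneg hc0 (mul_nonneg ht he0.le)]
  have hne : x - z ≠ 0 := norm_pos_iff.1 (by linarith)
  rcases lt_or_ge (infDist x Ωᶜ) (δ / 2) with hin | hout
  · refine ⟨‖z - x‖⁻¹ • (z - x), norm_smul_inv_norm (by rwa [← neg_sub, neg_ne_zero]),
      fun u hu hua => ?_⟩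
    obtain ⟨t, w, rfl, ht0, ht1, hw, htw⟩ := cone (z - x) u (norm_sub_rev _ _) hu hua
    rw [← add_assoc]
    exact hΩ.inward_step_mem_frame hx hin.le (by linarith) ht0 ht1 hw (by linarith)
  · refine ⟨‖x - z‖⁻¹ • (x - z), norm_smul_inv_norm hne, fun u hu hua => ?_⟩
    obtain ⟨t, w, rfl, ht0, -, hw, htw⟩ := cone (x - z) u rfl hu hua
    rw [← add_assoc]
    exact hΩ.outward_step_mem_frame hxδ hz (by linarith) ht0 hw (by linarith)

end InnerProductSpace

theorem frame_cone_condition_general {d : ℕ} (hd : 1 ≤ d) (Ω₀ : Set (Euc d))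
    (hopen : IsOpen Ω₀) (hbdd : IsBounded Ω₀) (hconv : Convex ℝ Ω₀) :
    ∃ δ₀ > (0 : ℝ), ∃ θ ∈ Set.Ioo (0 : ℝ) Real.pi, ∀ δ : ℝ, 0 < δ → δ ≤ δ₀ →
      ∃ r > (0 : ℝ), ∀ x ∈ frameSet Ω₀ δ,
        ∃ v : Euc d, ‖v‖ = 1 ∧ otCone x v r θ ⊆ frameSet Ω₀ δ := by
  rcases Ω₀.eq_empty_or_nonempty with rfl | ⟨z, hz⟩
  · exact ⟨1, one_pos, π / 2, ⟨by positivity, by linarith [pi_pos]⟩,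
      fun δ _ _ => ⟨1, one_pos, fun x hx => absurd hx.1 id⟩⟩
  have : Nonempty (Fin d) := ⟨⟨0, hd⟩⟩
  have hρ : 0 < infDist z Ω₀ᶜ := by
    have hcompl : Ω₀ᶜ.Nonempty :=
      nonempty_compl.2 fun h => NormedSpace.unbounded_univ ℝ _ (h ▸ hbdd)
    exact (hopen.isClosed_compl.notMem_iff_infDist_pos hcompl).1 (not_not.2 hz)
  obtain ⟨D, hD0, hD⟩ := hbdd.subset_closedBall_lt 0 z
  set c := min 1 (infDist z Ω₀ᶜ / (2 * D))
  have hc0 : 0 < c := lt_min one_pos (by positivity)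
  have hcD : c * D ≤ infDist z Ω₀ᶜ / 2 := by
    calc c * D ≤ infDist z Ω₀ᶜ / (2 * D) * D := by gcongr; exact min_le_right _ _
      _ = infDist z Ω₀ᶜ / 2 := by field_simp
  refine ⟨infDist z Ω₀ᶜ / 2, by positivity, 2 * arctan c,
    ⟨by linarith [arctan_pos.2 hc0], by linarith [arctan_lt_pi_div_two c]⟩,
    fun δ hδ hδρ => ⟨δ / 8, by positivity, fun x hx => ?_⟩⟩
  rw [frameSet_eq_sep_infDist_compl] at hx ⊢
  obtain ⟨v, hv, hcone⟩ := hconv.exists_cone_subset_frame hz (fun y hy => hD hy) hc0.le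
    (min_le_left _ _) hcD hδ hδρ hx.1 hx.2
  refine ⟨v, hv, ?_⟩
  rintro _ ⟨u, rfl, hu, hua⟩
  rw [mul_div_cancel_left₀ _ two_ne_zero] at hu
  exact hcone u hu hua

/-- Lemma 4.5: the frame `Ω₀^{δ,c}` of a convex domain satisfies a uniform interior cone
condition. -/
theorem frame_cone_condition {d : ℕ} (hd : 1 ≤ d) (Ω₀ : Set (Euc d))
    (hopen : IsOpen Ω₀) (hbdd : IsBounded Ω₀) (hconv : Convex ℝ Ω₀)
    (δ' θ' : ℝ) (hδ' : 0 < δ') (hθ' : θ' ∈ Set.Ioo (0 : ℝ) Real.pi)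
    (hcone : otConeCond Ω₀ δ' θ') :
    ∃ δ₀ > (0 : ℝ), ∃ θ ∈ Set.Ioo (0 : ℝ) Real.pi, ∀ δ : ℝ, 0 < δ → δ ≤ δ₀ →
      ∃ r > (0 : ℝ), ∀ x ∈ frameSet Ω₀ δ,
        ∃ v : Euc d, ‖v‖ = 1 ∧ otCone x v r θ ⊆ frameSet Ω₀ δ :=
  frame_cone_condition_general hd Ω₀ hopen hbdd hconv
end
end
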